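/- Let C ⊆ R^n be a submodule (linear code) over an Artinian local ring R. The minimum Hamming weight of nonzero elements of C equals the minimum Hamming weight of nonzero elements of soc(C). -/

import Mathlib

open IsLocalRing

/-- Length of a module, as a natural number: the Krull dimension of its submodule lattice
(i.e. the supremum of lengths of chains of submodules). -/
noncomputable def lenN (R M : Type*) [CommRing R] [AddCommGroup M] [Module R M] : ℕ :=
  ((WithBot.unbotD 0 (Order.krullDim (Submodule R M)))).toNat

/-- The socle of a module over a local ring: elements killed by the maximal ideal. -/
abbrev socle (R M : Type*) [CommRing R] [IsLocalRing R] [AddCommGroup M] [Module R M] :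
    Submodule R M :=
  Submodule.torsionBySet R M (maximalIdeal R)

/-- type(M) = dim_K soc(M), the dimension of the socle over the residue field K = R/m. -/
noncomputable def typeOf (R M : Type*) [CommRing R] [IsLocalRing R] [AddCommGroup M]
    [Module R M] : ℕ :=
  Module.finrank (R ⧸ maximalIdeal R) (socle R M)

/-- Minimal number of generators of a module. -/
noncomputable def mu (R M : Type*) [CommRing R] [AddCommGroup M] [Module R M] : ℕ :=
  sInf {k : ℕ | ∃ s : Finset M, s.card = k ∧ Submodule.span R (s : Set M) = ⊤}

/-- Free rank: the largest r admitting an R-linear surjection M → R^r. -/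
noncomputable def freeRank (R M : Type*) [CommRing R] [AddCommGroup M] [Module R M] : ℕ :=
  sSup {r : ℕ | ∃ f : M →ₗ[R] (Fin r → R), Function.Surjective f}

/-- An Artinian local ring is Frobenius if its socle is 1-dimensional over the residue field. -/
def IsFrobenius (R : Type*) [CommRing R] [IsLocalRing R] : Prop :=
  typeOf R R = 1

/-- The orthogonal (dual) code with respect to the standard bilinear form on R^n. -/
def dualCode {R : Type*} [CommRing R] {n : ℕ} (C : Submodule R (Fin n → R)) :
    Submodule R (Fin n → R) where
  carrier := {v | ∀ w ∈ C, ∑ i, v i * w i = 0}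
  zero_mem' := by intro w _; simp
  add_mem' := by
    intro a b ha hb w hw
    simpa [add_mul, Finset.sum_add_distrib] using by rw [ha w hw, hb w hw, add_zero]
  smul_mem' := by
    intro c a ha w hw
    simp only [Set.mem_setOf_eq] at ha ⊢
    simp [Pi.smul_apply, smul_eq_mul, mul_assoc, ← Finset.mul_sum, ha w hw]

/-- The submodule H_A of vectors of R^n supported on a set A of coordinates. -/
def suppCode (R : Type*) [CommRing R] {n : ℕ} (A : Finset (Fin n)) :
    Submodule R (Fin n → R) where
  carrier := {v | ∀ i, i ∉ A → v i = 0}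
  zero_mem' := by intro i _; simp
  add_mem' := by intro a b ha hb i hi; simp [ha i hi, hb i hi]
  smul_mem' := by intro c a ha i hi; simp [ha i hi]

open Classical in
/-- Hamming weight of a vector. -/
noncomputable def wt {R : Type*} [CommRing R] {n : ℕ} (v : Fin n → R) : ℕ :=
  (Finset.univ.filter (fun i => v i ≠ 0)).card

/-- Minimum Hamming distance (= minimum weight of a nonzero codeword) of a code. -/
noncomputable def dH {R : Type*} [CommRing R] {n : ℕ} (C : Submodule R (Fin n → R)) : ℕ :=
  sInf {w : ℕ | ∃ v ∈ C, v ≠ 0 ∧ wt v = w}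

/-- The coordinatewise reduction R^n → K^n modulo the maximal ideal. -/
def rho (R : Type*) [CommRing R] [IsLocalRing R] {n : ℕ} (v : Fin n → R) :
    Fin n → R ⧸ maximalIdeal R :=
  fun i => Ideal.Quotient.mk (maximalIdeal R) (v i)

/-!
Multiplying a vector by a scalar never creates new nonzero coordinates, so it suffices that every
nonzero codeword `v` has a nonzero multiple `a • v` in the socle. Because the maximal ideal of an
Artinian local ring is nilpotent, we may keep multiplying `v` by elements of `m` as long as this
gives something nonzero; the process stops after finitely many steps, at a nonzero vector killed
by `m`.
-/

theorem Submodule.exists_smul_mem_torsionBySet_ne_zero {R M : Type*} [CommSemiring R]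
    [AddCommMonoid M] [Module R M] {I : Ideal R} (hI : IsNilpotent I) {x : M} (hx : x ≠ 0) :
    ∃ a : R, a • x ∈ torsionBySet R M I ∧ a • x ≠ 0 := by
  obtain ⟨N, hN⟩ := hI
  suffices key : ∀ k (x : M), x ≠ 0 → I ^ k ≤ Ideal.torsionOf R M x →
      ∃ a : R, a • x ∈ torsionBySet R M I ∧ a • x ≠ 0 from
    key N x hx (hN ▸ bot_le)
  intro k
  induction k with
  | zero =>
    intro x hx hk
    rw [pow_zero, Ideal.one_eq_top, top_le_iff, Ideal.torsionOf_eq_top_iff] at hk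
    exact absurd hk hx
  | succ k ih =>
    intro x hx hk
    by_cases hxI : x ∈ torsionBySet R M I
    · exact ⟨1, by rwa [one_smul], by rwa [one_smul]⟩
    obtain ⟨b, hbI, hbx⟩ : ∃ b ∈ I, b • x ≠ 0 := by
      simpa [mem_torsionBySet_iff] using hxI
    have hk' : I ^ k ≤ Ideal.torsionOf R M (b • x) := fun c hc => by
      rw [Ideal.mem_torsionOf_iff, smul_smul]
      exact hk (pow_succ I k ▸ Ideal.mul_mem_mul hc hbI)
    obtain ⟨a, ha, hax⟩ := ih (b • x) hbx hk'
    exact ⟨a * b, by rwa [mul_smul], by rwa [mul_smul]⟩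

theorem IsArtinianRing.isNilpotent_maximalIdeal (R : Type*) [CommRing R] [IsLocalRing R]
    [IsArtinianRing R] : IsNilpotent (maximalIdeal R) :=
  jacobson_eq_maximalIdeal (⊥ : Ideal R) bot_ne_top ▸ isNilpotent_jacobson_bot

lemma wt_smul_le {R : Type*} [CommRing R] {n : ℕ} (a : R) (v : Fin n → R) :
    wt (a • v) ≤ wt v := by
  classical
  refine Finset.card_le_card fun i => ?_
  simp only [Finset.mem_filter, Finset.mem_univ, true_and, Pi.smul_apply, smul_eq_mul]
  exact fun hav hv => hav (by rw [hv, mul_zero])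

lemma dH_eq_of_le_of_forall_exists_wt_le {R : Type*} [CommRing R] {n : ℕ}
    {C D : Submodule R (Fin n → R)} (hDC : D ≤ C)
    (h : ∀ v ∈ C, v ≠ 0 → ∃ w ∈ D, w ≠ 0 ∧ wt w ≤ wt v) :
    dH C = dH D := by
  refine csInf_eq_csInf_of_forall_exists_le ?_ ?_
  · rintro _ ⟨v, hv, hv0, rfl⟩
    obtain ⟨w, hw, hw0, hwv⟩ := h v hv hv0
    exact ⟨wt w, ⟨w, hw, hw0, rfl⟩, hwv⟩
  · rintro _ ⟨w, hw, hw0, rfl⟩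
    exact ⟨wt w, ⟨w, hDC hw, hw0, rfl⟩, le_rfl⟩

theorem stmt5_general (R : Type*) [CommRing R] [IsLocalRing R] [IsArtinianRing R]
    {n : ℕ} (C : Submodule R (Fin n → R)) :
    dH C = dH (C ⊓ socle R (Fin n → R)) := by
  refine dH_eq_of_le_of_forall_exists_wt_le inf_le_left fun v hv hv0 => ?_
  obtain ⟨a, ha, hav⟩ := Submodule.exists_smul_mem_torsionBySet_ne_zero
    (IsArtinianRing.isNilpotent_maximalIdeal R) hv0
  exact ⟨a • v, ⟨C.smul_mem a hv, ha⟩, hav, wt_smul_le a v⟩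

/-- the minimum Hamming weight of a nonzero code C ⊆ R^n equals
that of its socle soc(C) = C ∩ soc(R^n). -/
theorem stmt5 (R : Type*) [CommRing R] [IsLocalRing R] [IsArtinianRing R]
    {n : ℕ} (C : Submodule R (Fin n → R)) (hC : C ≠ ⊥) :
    dH C = dH (C ⊓ socle R (Fin n → R)) :=
  stmt5_general R C
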